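/- For a positive semidefinite operator ρ on a finite-dimensional Hilbert space A of dimension d, the tensor power ρ^{⊗n} has at most (n+1)^{d-1} distinct eigenvalues. -/

import Mathlib

open scoped Kronecker ComplexOrder
open Matrix

noncomputable section
namespace GEAT

variable {n : Type*} [Fintype n] [DecidableEq n]

/-- Partial trace over the second tensor factor. -/
def ptr2 {A R : Type*} [Fintype R] (M : Matrix (A × R) (A × R) ℂ) : Matrix A A ℂ :=
  fun a a' => ∑ r, M (a, r) (a', r)

/-- Partial trace over the first tensor factor. -/
def ptr1 {A R : Type*} [Fintype A] (M : Matrix (A × R) (A × R) ℂ) : Matrix R R ℂ :=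
  fun r r' => ∑ a, M (a, r) (a, r')

/-- The tensor extension `Φ ⊗ id_C` of a linear map on matrices. -/
def lext {A B : Type*} [Fintype A] [DecidableEq A] [Fintype B] [DecidableEq B]
    (Φ : Matrix A A ℂ →ₗ[ℂ] Matrix B B ℂ) (C : Type*) [Fintype C] [DecidableEq C] :
    Matrix (A × C) (A × C) ℂ →ₗ[ℂ] Matrix (B × C) (B × C) ℂ where
  toFun M := fun p q => Φ (fun a a' => M (a, p.2) (a', q.2)) p.1 q.1
  map_add' M N := by
    funext p q
    have h : (fun a a' => (M + N) (a, p.2) (a', q.2))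
        = (fun a a' => M (a, p.2) (a', q.2)) + (fun a a' => N (a, p.2) (a', q.2)) := rfl
    show Φ _ p.1 q.1 = _
    erw [h, map_add]
    rfl
  map_smul' c M := by
    funext p q
    have h : (fun a a' => (c • M) (a, p.2) (a', q.2))
        = c • (fun a a' => M (a, p.2) (a', q.2)) := rfl
    show Φ _ p.1 q.1 = _
    erw [h, _root_.map_smul]
    rfl

/-- Complete positivity of a linear map on matrices. -/
def IsCPMap {A B : Type*} [Fintype A] [DecidableEq A] [Fintype B] [DecidableEq B]
    (Φ : Matrix A A ℂ →ₗ[ℂ] Matrix B B ℂ) : Prop :=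
  ∀ (k : ℕ) (M : Matrix (A × Fin k) (A × Fin k) ℂ), M.PosSemidef → ((lext Φ (Fin k)) M).PosSemidef

/-- Trace preservation. -/
def IsTPMap {A B : Type*} [Fintype A] [DecidableEq A] [Fintype B] [DecidableEq B]
    (Φ : Matrix A A ℂ →ₗ[ℂ] Matrix B B ℂ) : Prop :=
  ∀ M, (Φ M).trace = M.trace

/-- Quantum channel: completely positive and trace preserving. -/
def IsCPTPMap {A B : Type*} [Fintype A] [DecidableEq A] [Fintype B] [DecidableEq B]
    (Φ : Matrix A A ℂ →ₗ[ℂ] Matrix B B ℂ) : Prop :=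
  IsCPMap Φ ∧ IsTPMap Φ

/-- A density matrix. -/
def IsState {A : Type*} [Fintype A] (ρ : Matrix A A ℂ) : Prop :=
  ρ.PosSemidef ∧ ρ.trace = 1

/-- Real matrix power, via the continuous functional calculus. -/
def mrpow (M : Matrix n n ℂ) (p : ℝ) : Matrix n n ℂ :=
  cfc (fun x : ℝ => x ^ p) M

/-- Sandwiched Rényi divergence of order α (base-2 logarithm). -/
def sandwichedRenyi (α : ℝ) (ρ σ : Matrix n n ℂ) : ℝ :=
  (α - 1)⁻¹ * Real.logb 2
    ((mrpow (mrpow σ ((1 - α) / (2 * α)) * ρ * mrpow σ ((1 - α) / (2 * α))) α).trace.re)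

/-- Conditional Rényi entropy `H_α↓(A|B) = −D_α(ρ_AB ‖ 1_A ⊗ ρ_B)`. -/
def condH (α : ℝ) {A B : Type*} [Fintype A] [DecidableEq A] [Fintype B]
    [DecidableEq B] (ρ : Matrix (A × B) (A × B) ℂ) : ℝ :=
  - sandwichedRenyi α ρ ((1 : Matrix A A ℂ) ⊗ₖ ptr1 ρ)

/-- Conditional Rényi entropy `H_α↑(A|B) = sup_σ −D_α(ρ_AB ‖ 1_A ⊗ σ_B)`. -/
def condHup (α : ℝ) {A B : Type*} [Fintype A] [DecidableEq A] [Fintype B]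
    [DecidableEq B] (ρ : Matrix (A × B) (A × B) ℂ) : ℝ :=
  ⨆ σ : {σ : Matrix B B ℂ // IsState σ},
    - sandwichedRenyi α ρ ((1 : Matrix A A ℂ) ⊗ₖ (σ : Matrix B B ℂ))

/-- Von Neumann entropy (base 2). -/
def vnEntropy (ρ : Matrix n n ℂ) : ℝ :=
  - ((cfc (fun x : ℝ => x * Real.logb 2 x) ρ).trace.re)

/-- Conditional von Neumann entropy `H(A|B) = H(AB) − H(B)`. -/
def condVN {A B : Type*} [Fintype A] [DecidableEq A] [Fintype B] [DecidableEq B]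
    (ρ : Matrix (A × B) (A × B) ℂ) : ℝ :=
  vnEntropy ρ - vnEntropy (ptr1 ρ)

/-- Max-relative entropy `D_max(ρ‖σ) = log min {λ ≥ 0 : ρ ≤ λσ}`. -/
def Dmax (ρ σ : Matrix n n ℂ) : ℝ :=
  Real.logb 2 (sInf {l : ℝ | 0 ≤ l ∧ (l • σ - ρ).PosSemidef})

/-- Fidelity `F(ρ,σ) = Tr √(√σ ρ √σ)`. -/
def fidelity (ρ σ : Matrix n n ℂ) : ℝ :=
  ((mrpow (mrpow σ (1/2 : ℝ) * ρ * mrpow σ (1/2 : ℝ)) (1/2 : ℝ)).trace).re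

/-- Purified distance. -/
def purifiedDist (ρ σ : Matrix n n ℂ) : ℝ :=
  Real.sqrt (1 - (fidelity ρ σ) ^ 2)

/-- Trace norm. -/
def trNorm {m : Type*} [Fintype m] [DecidableEq m] {k : Type*} [Fintype k]
    (M : Matrix k m ℂ) : ℝ :=
  ((mrpow (Mᴴ * M) (1/2 : ℝ)).trace).re

/-- Smoothed conditional min-entropy (smoothing in purified distance). -/
def smoothHmin (ε : ℝ) {A B : Type*} [Fintype A] [DecidableEq A] [Fintype B]
    [DecidableEq B] (ρ : Matrix (A × B) (A × B) ℂ) : ℝ :=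
  sSup {h : ℝ | ∃ τ : Matrix (A × B) (A × B) ℂ, τ.PosSemidef ∧ τ.trace.re ≤ 1 ∧
    purifiedDist ρ τ ≤ ε ∧ ∃ σ : Matrix B B ℂ, IsState σ ∧
      h = - Dmax τ ((1 : Matrix A A ℂ) ⊗ₖ σ)}

/-- Smoothed conditional max-entropy (smoothing in purified distance). -/
def smoothHmax (ε : ℝ) {A B : Type*} [Fintype A] [DecidableEq A] [Fintype B]
    [DecidableEq B] (ρ : Matrix (A × B) (A × B) ℂ) : ℝ :=
  Real.logb 2 (sInf {v : ℝ | ∃ τ : Matrix (A × B) (A × B) ℂ, τ.PosSemidef ∧ τ.trace.re ≤ 1 ∧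
    purifiedDist ρ τ ≤ ε ∧
    v = ⨆ σ : {σ : Matrix B B ℂ // IsState σ},
      (trNorm (mrpow τ (1/2 : ℝ) * mrpow ((1 : Matrix A A ℂ) ⊗ₖ (σ : Matrix B B ℂ)) (1/2 : ℝ))) ^ 2})

/-- n-fold tensor power of a matrix. -/
def tpow {A : Type*} [Fintype A] (ρ : Matrix A A ℂ) (m : ℕ) :
    Matrix (Fin m → A) (Fin m → A) ℂ :=
  fun x y => ∏ i, ρ (x i) (y i)

/-- n-fold tensor power of a linear map on matrices. -/
def npow {A B : Type*} [Fintype A] [DecidableEq A] [Fintype B] [DecidableEq B]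
    (Φ : Matrix A A ℂ →ₗ[ℂ] Matrix B B ℂ) (m : ℕ) :
    Matrix (Fin m → A) (Fin m → A) ℂ →ₗ[ℂ] Matrix (Fin m → B) (Fin m → B) ℂ where
  toFun M := fun x y => ∑ a : Fin m → A, ∑ a' : Fin m → A,
    M a a' * ∏ i, Φ (Matrix.single (a i) (a' i) 1) (x i) (y i)
  map_add' M N := by
    funext x y
    show ∑ a : Fin m → A, ∑ a' : Fin m → A, _ = _
    simp [Matrix.add_apply, add_mul, Finset.sum_add_distrib]
    rfl
  map_smul' c M := by
    funext x y
    show ∑ a : Fin m → A, ∑ a' : Fin m → A, _ = _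
    simp [Matrix.smul_apply, smul_eq_mul, Finset.mul_sum, mul_assoc]
    show _ = c * _
    simp [Finset.mul_sum]

/-- Stabilised channel divergence of order α. -/
def channelDiv (α : ℝ) {A B : Type*} [Fintype A] [DecidableEq A] [Fintype B]
    [DecidableEq B] (Φ Ψ : Matrix A A ℂ →ₗ[ℂ] Matrix B B ℂ) : ℝ :=
  ⨆ ω : {ω : Matrix (A × A) (A × A) ℂ // IsState ω},
    sandwichedRenyi α (lext Φ A (ω : Matrix (A × A) (A × A) ℂ))
      (lext Ψ A (ω : Matrix (A × A) (A × A) ℂ))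

/-- Regularised channel divergence `sup_n (1/n) D_α(Φ^{⊗n} ‖ Ψ^{⊗n})`. -/
def channelDivReg (α : ℝ) {A B : Type*} [Fintype A] [DecidableEq A] [Fintype B]
    [DecidableEq B] (Φ Ψ : Matrix A A ℂ →ₗ[ℂ] Matrix B B ℂ) : ℝ :=
  ⨆ m : ℕ, ((m : ℝ) + 1)⁻¹ * channelDiv α (npow Φ (m + 1)) (npow Ψ (m + 1))

open scoped Classical in
/-- Spectral projector of a Hermitian matrix onto the eigenspace of `t`. -/
def specProj {M : Matrix n n ℂ} (hM : M.IsHermitian) (t : ℝ) : Matrix n n ℂ :=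
  ∑ i : n, if hM.eigenvalues i = t then
    (hM.eigenvectorUnitary : Matrix n n ℂ) * Matrix.single i i 1 *
      star (hM.eigenvectorUnitary : Matrix n n ℂ)
  else 0

open scoped Classical in
/-- The spectral pinching map `P_M(ω) = Σ_λ P_λ ω P_λ` (zero if `M` is not Hermitian). -/
def pinching (M ω : Matrix n n ℂ) : Matrix n n ℂ :=
  if hM : M.IsHermitian then
    ∑ t ∈ Finset.univ.image hM.eigenvalues, specProj hM t * ω * specProj hM t
  else 0


/-!
Diagonalising `ρ = U D U⋆`, the tensor power `ρ^{⊗m}` is unitarily conjugate to the diagonal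
matrix `D^{⊗m}`, whose entries are the products `λ_{x₁} ⋯ λ_{xₘ}` of eigenvalues of `ρ`. Such a
product depends only on the multiset `{x₁, …, xₘ}`, and by stars and bars there are
`(m + d - 1).choose (d - 1) ≤ (m + 1)^(d - 1)` multisets of size `m` on `d` points.
-/

section TensorPower

variable {A : Type*} [Fintype A]

lemma tpow_mul (M N : Matrix A A ℂ) (m : ℕ) : tpow (M * N) m = tpow M m * tpow N m := by
  ext x y
  simp only [tpow, mul_apply]
  rw [Finset.prod_univ_sum, Fintype.piFinset_univ]
  simp only [Finset.prod_mul_distrib]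

lemma tpow_diagonal [DecidableEq A] (f : A → ℂ) (m : ℕ) :
    tpow (diagonal f) m = diagonal fun x : Fin m → A => ∏ i, f (x i) := by
  ext x y
  by_cases hxy : x = y
  · subst hxy
    simp [tpow]
  · obtain ⟨i, hi⟩ := Function.ne_iff.mp hxy
    rw [diagonal_apply_ne _ hxy]
    exact Finset.prod_eq_zero (Finset.mem_univ i) (diagonal_apply_ne _ hi)

lemma tpow_one [DecidableEq A] (m : ℕ) : tpow (1 : Matrix A A ℂ) m = 1 := by
  rw [← diagonal_one, tpow_diagonal]
  simp

lemma tpow_star (M : Matrix A A ℂ) (m : ℕ) : tpow (star M) m = star (tpow M m) := by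
  ext x y
  simp [tpow, star_apply]

lemma tpow_mem_unitary [DecidableEq A] {U : Matrix A A ℂ} (hU : U ∈ unitary (Matrix A A ℂ))
    (m : ℕ) : tpow U m ∈ unitary (Matrix (Fin m → A) (Fin m → A) ℂ) := by
  rw [Unitary.mem_iff] at hU ⊢
  simp only [← tpow_star, ← tpow_mul, hU.1, hU.2, tpow_one, and_self]

lemma spectrum_tpow_of_isHermitian [DecidableEq A] {ρ : Matrix A A ℂ} (hρ : ρ.IsHermitian)
    (m : ℕ) :
    spectrum ℂ (tpow ρ m) = Set.range fun x : Fin m → A => ∏ i, (hρ.eigenvalues (x i) : ℂ) := by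
  set U := hρ.eigenvectorUnitary
  have hconj : tpow ρ m = tpow U m * tpow (diagonal (RCLike.ofReal ∘ hρ.eigenvalues)) m *
      star (tpow U m) := by
    conv_lhs => rw [hρ.spectral_theorem, Unitary.conjStarAlgAut_apply]
    rw [tpow_mul, tpow_mul, tpow_star]
  rw [hconj, tpow_diagonal,
    Unitary.spectrum_star_right_conjugate (U := ⟨_, tpow_mem_unitary U.2 m⟩), spectrum_diagonal]
  rfl

end TensorPower

lemma multichoose_le_succ_pow (d m : ℕ) : d.multichoose m ≤ (m + 1) ^ (d - 1) := by
  rcases d with _ | k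
  · cases m <;> simp
  · rw [Nat.multichoose_eq, show k + 1 + m - 1 = m + k by omega, Nat.choose_symm_add]
    exact Nat.choose_add_le_add_one_pow m k

lemma ncard_range_prod_comp_le {M : Type*} [CommMonoid M] {A : Type*} [Fintype A] (f : A → M)
    (m : ℕ) :
    (Set.range fun x : Fin m → A => ∏ i, f (x i)).ncard ≤ (m + 1) ^ (Fintype.card A - 1) := by
  classical
  have hsub : (Set.range fun x : Fin m → A => ∏ i, f (x i)) ⊆
      Set.range fun s : Sym A m => ((s : Multiset A).map f).prod := by
    rintro _ ⟨x, rfl⟩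
    refine ⟨⟨Finset.univ.val.map x, by simp⟩, ?_⟩
    simp [Finset.prod_eq_multiset_prod, Function.comp_def]
  calc _ ≤ (Set.range fun s : Sym A m => ((s : Multiset A).map f).prod).ncard :=
        Set.ncard_le_ncard hsub (Set.finite_range _)
    _ ≤ (Set.univ : Set (Sym A m)).ncard := by
        rw [← Set.image_univ]
        exact Set.ncard_image_le
    _ = (Fintype.card A).multichoose m := by
        rw [Set.ncard_univ, Nat.card_eq_fintype_card, Sym.card_sym_eq_multichoose]
    _ ≤ (m + 1) ^ (Fintype.card A - 1) := multichoose_le_succ_pow _ _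

/-- For a positive semidefinite operator `ρ` on a finite-dimensional Hilbert
space `A` of dimension `d`, the tensor power `ρ^{⊗n}` has at most `(n+1)^(d-1)` distinct
eigenvalues. -/
theorem tensor_power_spectrum_card {A : Type*} [Fintype A] [DecidableEq A]
    (ρ : Matrix A A ℂ) (hρ : ρ.PosSemidef) (m : ℕ) :
    (spectrum ℂ (tpow ρ m)).ncard ≤ (m + 1) ^ (Fintype.card A - 1) := by
  rw [spectrum_tpow_of_isHermitian hρ.1]
  exact ncard_range_prod_comp_le (fun a => (hρ.1.eigenvalues a : ℂ)) m

end GEAT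
end
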